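/- arXiv:1609.01897 — 5 statements merged into one kernel-verified Lean document; each statement's English description precedes it below -/
import Mathlib

section
/- Let (K,d) be a compact geodesic metric space, let ε > 0, and let n ∈ ℕ with n ≥ 1. If ψᵏ = (ψᵏ_L, ψᵏ_M) : [0, nε] → K × K, k ∈ ℕ, is a sequence of good curves, then there is a subsequence converging uniformly (with respect to the max metric ρ((A₁,A₂),(B₁,B₂)) = max{d(A₁,B₁), d(A₂,B₂)} on K × K) to a curve ψ = (ψ_L, ψ_M) : [0, nε] → K × K which is again a good curve. -/
/-! The restrictions of the curves to `[0, nε]` are `1`-Lipschitz maps into the compact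
space `K × K`, so by Arzelà–Ascoli a subsequence converges uniformly. Each defining condition
of a good curve is a closed condition on the values of the curve at finitely many points (for
the Lipschitz bounds, at two points), hence it survives pointwise limits. -/

open Filter Topology

variable {K : Type*} [MetricSpace K]

/-- `C` lies between `A` and `B`, i.e. `d(A,C) + d(C,B) = d(A,B)`. -/
def LiesBetween (C A B : K) : Prop := dist A C + dist C B = dist A B

/-- `γ` is a geodesic path on `[a, b]`: `d(γ t, γ t') = |t - t'|` for `t, t' ∈ [a,b]`. -/
def IsGeodPath (γ : ℝ → K) (a b : ℝ) : Prop :=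
  ∀ t ∈ Set.Icc a b, ∀ t' ∈ Set.Icc a b, dist (γ t) (γ t') = |t - t'|

/-- A geodesic space: every pair of points is joined by a geodesic path. -/
def GeodesicSpace (K : Type*) [MetricSpace K] : Prop :=
  ∀ A B : K, ∃ (a b : ℝ) (γ : ℝ → K), a ≤ b ∧ IsGeodPath γ a b ∧ γ a = A ∧ γ b = B

/-- The betweenness property: for pairwise distinct `A B C D`, if `B` lies between
`A` and `C`, and `C` lies between `B` and `D`, then `B` and `C` lie between `A` and `D`. -/
def BetweennessProperty (K : Type*) [MetricSpace K] : Prop :=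
  ∀ A B C D : K, A ≠ B → A ≠ C → A ≠ D → B ≠ C → B ≠ D → C ≠ D →
    LiesBetween B A C → LiesBetween C B D →
    LiesBetween B A D ∧ LiesBetween C A D

/-- A good curve `(L, M) : [aε, bε] → K × K` (with `τᵢ = iε`). -/
def GoodCurve (ε : ℝ) (a b : ℕ) (L M : ℝ → K) : Prop :=
  LipschitzOnWith 1 L (Set.Icc ((a : ℝ) * ε) ((b : ℝ) * ε)) ∧
  LipschitzOnWith 1 M (Set.Icc ((a : ℝ) * ε) ((b : ℝ) * ε)) ∧
  (∀ i : ℕ, a ≤ i → i < b →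
    LiesBetween (L (((i : ℝ) + 1) * ε)) (L ((i : ℝ) * ε)) (M ((i : ℝ) * ε))) ∧
  (∀ i : ℕ, a ≤ i → i < b → dist (L ((i : ℝ) * ε)) (L (((i : ℝ) + 1) * ε)) = ε) ∧
  (∀ i : ℕ, a ≤ i → i ≤ b → ε ≤ dist (L ((i : ℝ) * ε)) (M ((i : ℝ) * ε)))

open BoundedContinuousFunction Set in
theorem exists_strictMono_tendstoUniformlyOn_of_equicontinuous {α β : Type*}
    [TopologicalSpace α] [MetricSpace β] [CompactSpace β] {s : Set α} (hs : IsCompact s)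
    {f : ℕ → α → β} (hf : Equicontinuous fun k => s.domRestrict (f k)) :
    ∃ φ : ℕ → ℕ, StrictMono φ ∧ ∃ g : α → β,
      TendstoUniformlyOn (fun k => f (φ k)) g atTop s := by
  have : CompactSpace s := isCompact_iff_compactSpace.mp hs
  let F : ℕ → s →ᵇ β := fun k => mkOfCompact ⟨s.domRestrict (f k), hf.continuous k⟩
  have hF : Equicontinuous ((↑) : range F → s → β) := by
    convert hf.comp fun a : range F => a.2.choose with a
    rw [← a.2.choose_spec]
    rfl
  obtain ⟨G, -, φ, hφ, hG⟩ := (arzela_ascoli univ isCompact_univ (range F)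
    (fun _ _ _ => mem_univ _) hF).tendsto_subseq fun k => subset_closure (mem_range_self k)
  refine ⟨φ, hφ, Function.extend Subtype.val G (f 0), ?_⟩
  rw [tendstoUniformlyOn_iff_tendstoUniformly_comp_coe,
    Function.extend_comp Subtype.val_injective]
  exact tendsto_iff_tendstoUniformly.mp hG

theorem LipschitzOnWith.of_tendsto {ι α β : Type*}
    [PseudoEMetricSpace α] [PseudoEMetricSpace β]
    {l : Filter ι} [l.NeBot] {C : NNReal} {s : Set α} {f : ι → α → β} {g : α → β}
    (hf : ∀ k, LipschitzOnWith C (f k) s) (hg : ∀ x ∈ s, Tendsto (f · x) l (𝓝 (g x))) :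
    LipschitzOnWith C g s := by
  simp only [lipschitzOnWith_iff_restrict] at hf ⊢
  exact (isClosed_setOfPred_lipschitzWith C).mem_of_tendsto
    (tendsto_pi_nhds.2 fun x => hg x x.2) (Eventually.of_forall hf)

theorem natCast_mul_mem_Icc {ε : ℝ} (hε : 0 ≤ ε) {a b i : ℕ}
    (hai : a ≤ i) (hib : i ≤ b) :
    (i : ℝ) * ε ∈ Set.Icc ((a : ℝ) * ε) ((b : ℝ) * ε) := by
  constructor <;> gcongr

theorem GoodCurve.of_tendsto {K ι : Type*} [MetricSpace K] {l : Filter ι} [l.NeBot]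
    {ε : ℝ} (hε : 0 ≤ ε) {a b : ℕ} {L M : ι → ℝ → K} {gL gM : ℝ → K}
    (h : ∀ k, GoodCurve ε a b (L k) (M k))
    (hL : ∀ t ∈ Set.Icc ((a : ℝ) * ε) ((b : ℝ) * ε), Tendsto (L · t) l (𝓝 (gL t)))
    (hM : ∀ t ∈ Set.Icc ((a : ℝ) * ε) ((b : ℝ) * ε), Tendsto (M · t) l (𝓝 (gM t))) :
    GoodCurve ε a b gL gM := by
  have tL (i : ℕ) (hai : a ≤ i) (hib : i ≤ b) := hL _ (natCast_mul_mem_Icc hε hai hib)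
  have tM (i : ℕ) (hai : a ≤ i) (hib : i ≤ b) := hM _ (natCast_mul_mem_Icc hε hai hib)
  have tL_succ (i : ℕ) (hai : a ≤ i) (hib : i < b) :
      Tendsto (L · (((i : ℝ) + 1) * ε)) l (𝓝 (gL (((i : ℝ) + 1) * ε))) := by
    exact_mod_cast tL (i + 1) (by omega) hib
  refine ⟨.of_tendsto (fun k => (h k).1) hL, .of_tendsto (fun k => (h k).2.1) hM,
    fun i hai hib => ?_, fun i hai hib => ?_, fun i hai hib => ?_⟩
  · exact tendsto_nhds_unique_of_eventuallyEq
      (((tL i hai hib.le).dist (tL_succ i hai hib)).add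
        ((tL_succ i hai hib).dist (tM i hai hib.le)))
      ((tL i hai hib.le).dist (tM i hai hib.le)) (.of_forall fun k => (h k).2.2.1 i hai hib)
  · exact tendsto_nhds_unique_of_eventuallyEq ((tL i hai hib.le).dist (tL_succ i hai hib))
      tendsto_const_nhds (.of_forall fun k => (h k).2.2.2.1 i hai hib)
  · exact ge_of_tendsto ((tL i hai hib).dist (tM i hai hib))
      (.of_forall fun k => (h k).2.2.2.2 i hai hib)

theorem stmt_3_general {K : Type*} [MetricSpace K] [CompactSpace K]
    (ε : ℝ) (hε : 0 < ε) (n : ℕ)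
    (ψL ψM : ℕ → ℝ → K) (hψ : ∀ k, GoodCurve ε 0 n (ψL k) (ψM k)) :
    ∃ φ : ℕ → ℕ, StrictMono φ ∧ ∃ gL gM : ℝ → K, GoodCurve ε 0 n gL gM ∧
      TendstoUniformlyOn (fun k t => (ψL (φ k) t, ψM (φ k) t))
        (fun t => (gL t, gM t)) atTop (Set.Icc 0 ((n : ℝ) * ε)) := by
  have hLip (k : ℕ) :
      LipschitzOnWith 1 (fun t => (ψL k t, ψM k t)) (Set.Icc 0 ((n : ℝ) * ε)) := by
    simpa using (hψ k).1.prodMk (hψ k).2.1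
  obtain ⟨φ, hφ, g, hg⟩ :=
    exists_strictMono_tendstoUniformlyOn_of_equicontinuous isCompact_Icc
      (LipschitzWith.uniformEquicontinuous _ 1 fun k => (hLip k).to_restrict).equicontinuous
  refine ⟨φ, hφ, fun t => (g t).1, fun t => (g t).2, ?_, hg⟩
  refine GoodCurve.of_tendsto (l := atTop) hε.le (fun k => hψ (φ k))
    (fun t ht => ?_) (fun t ht => ?_)
  · exact (continuous_fst.tendsto _).comp (hg.tendsto_at (by simpa using ht))
  · exact (continuous_snd.tendsto _).comp (hg.tendsto_at (by simpa using ht))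

/-- In a compact geodesic space, a sequence of good curves on `[0, nε]` has a
subsequence converging uniformly (in the max metric on `K × K`) to a good curve. -/
theorem stmt_3 {K : Type*} [MetricSpace K] [CompactSpace K] (hK : GeodesicSpace K)
    (ε : ℝ) (hε : 0 < ε) (n : ℕ) (hn : 1 ≤ n)
    (ψL ψM : ℕ → ℝ → K) (hψ : ∀ k, GoodCurve ε 0 n (ψL k) (ψM k)) :
    ∃ φ : ℕ → ℕ, StrictMono φ ∧ ∃ gL gM : ℝ → K, GoodCurve ε 0 n gL gM ∧
      TendstoUniformlyOn (fun k t => (ψL (φ k) t, ψM (φ k) t))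
        (fun t => (gL t, gM t)) atTop (Set.Icc 0 ((n : ℝ) * ε)) :=
  stmt_3_general ε hε n ψL ψM hψ
end

section
/- Let (K,d) be a geodesic metric space satisfying the betweenness property, let ε > 0, and let γ = (L, M) : [τ_a, τ_b] → K × K be a good curve. Then the distance d_γ(t) = d(L(t), M(t)) does not increase: for all integers i, j with a ≤ i ≤ j ≤ b one has d_γ(τ_j) ≤ d_γ(τᵢ), and moreover d_γ(t) ≤ d_γ(τᵢ) for every t ∈ [τᵢ, τ_{i+1}] ⊂ [τ_a, τ_b]. -/
/-! By conditions (2) and (3), in each step `L` advances exactly `ε` towards `M τᵢ`,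
so `d(L τᵢ₊₁, M τᵢ) = d(L τᵢ, M τᵢ) - ε`. For `t ∈ [τᵢ, τᵢ₊₁]` the two
`1`-Lipschitz legs `L t ⇝ L τᵢ₊₁` and `M τᵢ ⇝ M t` cost at most `(τᵢ₊₁ - t) + (t - τᵢ) = ε`,
which is exactly what was gained. -/

open Filter Topology

variable {K : Type*} [MetricSpace K]

lemma LiesBetween.dist_right_eq_sub {A B C : K} (h : LiesBetween C A B) :
    dist C B = dist A B - dist A C := by
  unfold LiesBetween at h
  linarith

lemma LipschitzOnWith.dist_le_sub {L : ℝ → K} {S : Set ℝ} (hL : LipschitzOnWith 1 L S)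
    {s t : ℝ} (hs : s ∈ S) (ht : t ∈ S) (hst : s ≤ t) : dist (L s) (L t) ≤ t - s := by
  simpa [Real.dist_eq, abs_of_nonpos (sub_nonpos.2 hst)] using hL.dist_le_mul s hs t ht

lemma dist_le_dist_add_of_lipschitzOnWith {L M : ℝ → K} {s u t : ℝ}
    (hL : LipschitzOnWith 1 L (Set.Icc s u)) (hM : LipschitzOnWith 1 M (Set.Icc s u))
    (ht : t ∈ Set.Icc s u) : dist (L t) (M t) ≤ dist (L u) (M s) + (u - s) := by
  have hs : s ∈ Set.Icc s u := Set.left_mem_Icc.2 (ht.1.trans ht.2)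
  have hu : u ∈ Set.Icc s u := Set.right_mem_Icc.2 (ht.1.trans ht.2)
  calc dist (L t) (M t) ≤ dist (L t) (L u) + dist (L u) (M s) + dist (M s) (M t) :=
        dist_triangle4 _ _ _ _
    _ ≤ (u - t) + dist (L u) (M s) + (t - s) := by
        gcongr
        exacts [hL.dist_le_sub ht hu ht.2, hM.dist_le_sub hs ht ht.1]
    _ = dist (L u) (M s) + (u - s) := by ring

namespace GoodCurve

variable {ε : ℝ} {a b : ℕ} {L M : ℝ → K}

lemma Icc_step_subset (hε : 0 ≤ ε) {i : ℕ} (hai : a ≤ i) (hib : i < b) :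
    Set.Icc ((i : ℝ) * ε) (((i : ℝ) + 1) * ε) ⊆ Set.Icc ((a : ℝ) * ε) ((b : ℝ) * ε) := by
  have hai' : (a : ℝ) ≤ i := by exact_mod_cast hai
  have hib' : (i : ℝ) + 1 ≤ b := by exact_mod_cast hib
  exact Set.Icc_subset_Icc (by gcongr) (by gcongr)

lemma dist_succ_left (hγ : GoodCurve ε a b L M) {i : ℕ} (hai : a ≤ i) (hib : i < b) :
    dist (L (((i : ℝ) + 1) * ε)) (M ((i : ℝ) * ε)) =
      dist (L ((i : ℝ) * ε)) (M ((i : ℝ) * ε)) - ε := by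
  rw [(hγ.2.2.1 i hai hib).dist_right_eq_sub, hγ.2.2.2.1 i hai hib]

lemma dist_le_of_mem_step (hγ : GoodCurve ε a b L M) (hε : 0 ≤ ε) {i : ℕ} (hai : a ≤ i)
    (hib : i < b) {t : ℝ} (ht : t ∈ Set.Icc ((i : ℝ) * ε) (((i : ℝ) + 1) * ε)) :
    dist (L t) (M t) ≤ dist (L ((i : ℝ) * ε)) (M ((i : ℝ) * ε)) := by
  have hsub := Icc_step_subset hε hai hib
  have := dist_le_dist_add_of_lipschitzOnWith (hγ.1.mono hsub) (hγ.2.1.mono hsub) ht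
  rw [hγ.dist_succ_left hai hib] at this
  linarith

lemma dist_succ_le (hγ : GoodCurve ε a b L M) (hε : 0 ≤ ε) {i : ℕ} (hai : a ≤ i) (hib : i < b) :
    dist (L (((i + 1 : ℕ) : ℝ) * ε)) (M (((i + 1 : ℕ) : ℝ) * ε)) ≤
      dist (L ((i : ℝ) * ε)) (M ((i : ℝ) * ε)) := by
  push_cast
  exact hγ.dist_le_of_mem_step hε hai hib ⟨by nlinarith, le_rfl⟩

lemma dist_antitone (hγ : GoodCurve ε a b L M) (hε : 0 ≤ ε) {i j : ℕ} (hai : a ≤ i)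
    (hij : i ≤ j) (hjb : j ≤ b) :
    dist (L ((j : ℝ) * ε)) (M ((j : ℝ) * ε)) ≤ dist (L ((i : ℝ) * ε)) (M ((i : ℝ) * ε)) := by
  induction j, hij using Nat.le_induction with
  | base => exact le_rfl
  | succ n hin ih => exact (hγ.dist_succ_le hε (hai.trans hin) hjb).trans (ih (by omega))

end GoodCurve

theorem stmt_5_general {K : Type*} [MetricSpace K]
    (ε : ℝ) (hε : 0 < ε) (a b : ℕ)
    (L M : ℝ → K) (hgood : GoodCurve ε a b L M) :
    (∀ i j : ℕ, a ≤ i → i ≤ j → j ≤ b →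
      dist (L ((j : ℝ) * ε)) (M ((j : ℝ) * ε)) ≤ dist (L ((i : ℝ) * ε)) (M ((i : ℝ) * ε))) ∧
    (∀ i : ℕ, a ≤ i → i < b → ∀ t ∈ Set.Icc ((i : ℝ) * ε) (((i : ℝ) + 1) * ε),
      dist (L t) (M t) ≤ dist (L ((i : ℝ) * ε)) (M ((i : ℝ) * ε))) :=
  ⟨fun _ _ hai hij hjb => hgood.dist_antitone hε.le hai hij hjb,
    fun _ hai hib _ ht => hgood.dist_le_of_mem_step hε.le hai hib ht⟩

/-- For a good curve in a geodesic space with the betweenness property, the distance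
between the players does not increase. -/
theorem stmt_5 {K : Type*} [MetricSpace K] (hK : GeodesicSpace K)
    (hbtw : BetweennessProperty K) (ε : ℝ) (hε : 0 < ε) (a b : ℕ) (hab : a < b)
    (L M : ℝ → K) (hgood : GoodCurve ε a b L M) :
    (∀ i j : ℕ, a ≤ i → i ≤ j → j ≤ b →
      dist (L ((j : ℝ) * ε)) (M ((j : ℝ) * ε)) ≤ dist (L ((i : ℝ) * ε)) (M ((i : ℝ) * ε))) ∧
    (∀ i : ℕ, a ≤ i → i < b → ∀ t ∈ Set.Icc ((i : ℝ) * ε) (((i : ℝ) + 1) * ε),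
      dist (L t) (M t) ≤ dist (L ((i : ℝ) * ε)) (M ((i : ℝ) * ε))) :=
  stmt_5_general ε hε a b L M hgood
end

section
/- Let (K,d) be a compact geodesic metric space, let ε > 0, and let ζ = (L, M) : [0, ∞) → K × K be an ε-simple-pursuit curve such that d(L(t), M(t)) > ε for all t ≥ 0. Let Z* ∈ K × K be a limit point of the sequence (ζ(nε))_{n∈ℕ} with respect to the max metric ρ((A₁,A₂),(B₁,B₂)) = max{d(A₁,B₁), d(A₂,B₂)}, and let A be the closed ε/3-ball around Z* in (K × K, ρ). Then the set {n ∈ ℕ : ζ(nε) ∈ A} is infinite and contains no two consecutive integers; consequently there are infinitely many rounds of ζ for A. -/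
open Filter Topology

variable {K : Type*} [MetricSpace K]

/-- An `ε`-simple-pursuit curve `(L, M) : [0, ∞) → K × K`. -/
def SimplePursuitCurve (ε : ℝ) (L M : ℝ → K) : Prop :=
  LipschitzOnWith 1 L (Set.Ici (0 : ℝ)) ∧
  LipschitzOnWith 1 M (Set.Ici (0 : ℝ)) ∧
  ∀ i : ℕ, ε ≤ dist (L ((i : ℝ) * ε)) (M ((i : ℝ) * ε)) →
    dist (L ((i : ℝ) * ε)) (L (((i : ℝ) + 1) * ε)) = ε ∧
    LiesBetween (L (((i : ℝ) + 1) * ε)) (L ((i : ℝ) * ε)) (M ((i : ℝ) * ε))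

/-- The restriction of `ζ = (L, M)` to `[iε, jε]` is a round for `A ⊆ K × K`. -/
def IsRound (ε : ℝ) (L M : ℝ → K) (A : Set (K × K)) (i j : ℕ) : Prop :=
  i + 1 < j ∧
  (L ((i : ℝ) * ε), M ((i : ℝ) * ε)) ∈ A ∧
  (L ((j : ℝ) * ε), M ((j : ℝ) * ε)) ∈ A ∧
  ∀ k : ℕ, i < k → k < j → (L ((k : ℝ) * ε), M ((k : ℝ) * ε)) ∉ A

/-!
While the pursuer is more than `ε` away from the evader it moves exactly `ε` per sampling step,
so no two consecutive samples fit in a set of diameter `2ε/3 < ε`. The subsequence converging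
to `Z*` enters the `ε/3`-ball around `Z*` infinitely often, and every visit is followed, after
a gap of at least one step, by the next visit: these pairs are the rounds.
-/

theorem infinite_setOf_mem_of_tendsto_comp {X : Type*} [TopologicalSpace X] {f : ℕ → X}
    {φ : ℕ → ℕ} (hφ : StrictMono φ) {z : X} (hlim : Tendsto (f ∘ φ) atTop (𝓝 z))
    {s : Set X} (hs : s ∈ 𝓝 z) : {n | f n ∈ s}.Infinite :=
  Nat.frequently_atTop_iff_infinite.mp
    (hφ.tendsto_atTop.frequently (hlim.eventually hs).frequently)

theorem Nat.infinite_setOf_consecutive_pairs {S : Set ℕ} (hS : S.Infinite)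
    (hsucc : ∀ n ∈ S, n + 1 ∉ S) :
    {p : ℕ × ℕ | p.1 + 1 < p.2 ∧ p.1 ∈ S ∧ p.2 ∈ S ∧ ∀ k, p.1 < k → k < p.2 → k ∉ S}.Infinite := by
  have hmem : ∀ k, Nat.nth (· ∈ S) k ∈ S := Nat.nth_mem_of_infinite hS
  have hmono : StrictMono (Nat.nth (· ∈ S)) := Nat.nth_strictMono hS
  refine Set.infinite_of_injective_forall_mem
    (f := fun k => (Nat.nth (· ∈ S) k, Nat.nth (· ∈ S) (k + 1)))
    (fun a b hab => hmono.injective (Prod.ext_iff.mp hab).1) fun k => ?_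
  have hlt : Nat.nth (· ∈ S) k < Nat.nth (· ∈ S) (k + 1) := hmono k.lt_succ_self
  have hne : Nat.nth (· ∈ S) k + 1 ≠ Nat.nth (· ∈ S) (k + 1) := fun h =>
    hsucc _ (hmem k) (h ▸ hmem (k + 1))
  exact ⟨by omega, hmem k, hmem (k + 1), fun j hkj hjk hj =>
    (Nat.le_nth_of_lt_nth_succ hjk hj).not_gt hkj⟩

theorem Prod.dist_fst_le_two_mul_of_mem_closedBall {X Y : Type*} [PseudoMetricSpace X]
    [PseudoMetricSpace Y] {z p q : X × Y} {r : ℝ} (hp : p ∈ Metric.closedBall z r)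
    (hq : q ∈ Metric.closedBall z r) : dist p.1 q.1 ≤ 2 * r := by
  rw [Metric.mem_closedBall] at hp hq
  calc dist p.1 q.1 ≤ dist p q := by rw [Prod.dist_eq]; exact le_max_left _ _
    _ ≤ dist p z + dist q z := dist_triangle_right p q z
    _ ≤ 2 * r := by linarith

theorem SimplePursuitCurve.sample_succ_notMem_closedBall {ε : ℝ}
    {L M : ℝ → K} (hζ : SimplePursuitCurve ε L M) {n : ℕ}
    (hfar : ε ≤ dist (L ((n : ℝ) * ε)) (M ((n : ℝ) * ε))) {Z : K × K} {r : ℝ} (hr : 2 * r < ε)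
    (hn : (L ((n : ℝ) * ε), M ((n : ℝ) * ε)) ∈ Metric.closedBall Z r) :
    (L (((n : ℝ) + 1) * ε), M (((n : ℝ) + 1) * ε)) ∉ Metric.closedBall Z r := fun hsucc => by
  have hstep := (hζ.2.2 n hfar).1
  have := Prod.dist_fst_le_two_mul_of_mem_closedBall hn hsucc
  linarith

theorem stmt_8_general {K : Type*} [MetricSpace K]
    (ε : ℝ) (hε : 0 < ε) (L M : ℝ → K) (hζ : SimplePursuitCurve ε L M)
    (hfar : ∀ t : ℝ, 0 ≤ t → ε < dist (L t) (M t))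
    (Z : K × K) (φ : ℕ → ℕ) (hφ : StrictMono φ)
    (hlim : Tendsto (fun n => (L ((φ n : ℝ) * ε), M ((φ n : ℝ) * ε))) atTop (nhds Z)) :
    {n : ℕ | (L ((n : ℝ) * ε), M ((n : ℝ) * ε)) ∈ Metric.closedBall Z (ε / 3)}.Infinite ∧
    (∀ n : ℕ, (L ((n : ℝ) * ε), M ((n : ℝ) * ε)) ∈ Metric.closedBall Z (ε / 3) →
      (L (((n : ℝ) + 1) * ε), M (((n : ℝ) + 1) * ε)) ∉ Metric.closedBall Z (ε / 3)) ∧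
    {p : ℕ × ℕ | IsRound ε L M (Metric.closedBall Z (ε / 3)) p.1 p.2}.Infinite := by
  have hvisits :
      {n : ℕ | (L ((n : ℝ) * ε), M ((n : ℝ) * ε)) ∈ Metric.closedBall Z (ε / 3)}.Infinite :=
    infinite_setOf_mem_of_tendsto_comp (f := fun n : ℕ => (L ((n : ℝ) * ε), M ((n : ℝ) * ε)))
      hφ hlim (Metric.closedBall_mem_nhds Z (by positivity))
  have hgap : ∀ n : ℕ, (L ((n : ℝ) * ε), M ((n : ℝ) * ε)) ∈ Metric.closedBall Z (ε / 3) →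
      (L (((n : ℝ) + 1) * ε), M (((n : ℝ) + 1) * ε)) ∉ Metric.closedBall Z (ε / 3) :=
    fun n => hζ.sample_succ_notMem_closedBall (hfar _ (by positivity)).le (by linarith)
  refine ⟨hvisits, hgap, Nat.infinite_setOf_consecutive_pairs hvisits fun n hn => ?_⟩
  exact_mod_cast hgap n hn

/-- Around any limit point `Z*` of the sampled pursuit sequence, the closed `ε/3`-ball `A`
is visited at infinitely many sample times, never at two consecutive sample times, and
consequently there are infinitely many rounds for `A`. -/
theorem stmt_8 {K : Type*} [MetricSpace K] [CompactSpace K] (hK : GeodesicSpace K)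
    (ε : ℝ) (hε : 0 < ε) (L M : ℝ → K) (hζ : SimplePursuitCurve ε L M)
    (hfar : ∀ t : ℝ, 0 ≤ t → ε < dist (L t) (M t))
    (Z : K × K) (φ : ℕ → ℕ) (hφ : StrictMono φ)
    (hlim : Tendsto (fun n => (L ((φ n : ℝ) * ε), M ((φ n : ℝ) * ε))) atTop (nhds Z)) :
    {n : ℕ | (L ((n : ℝ) * ε), M ((n : ℝ) * ε)) ∈ Metric.closedBall Z (ε / 3)}.Infinite ∧
    (∀ n : ℕ, (L ((n : ℝ) * ε), M ((n : ℝ) * ε)) ∈ Metric.closedBall Z (ε / 3) →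
      (L (((n : ℝ) + 1) * ε), M (((n : ℝ) + 1) * ε)) ∉ Metric.closedBall Z (ε / 3)) ∧
    {p : ℕ × ℕ | IsRound ε L M (Metric.closedBall Z (ε / 3)) p.1 p.2}.Infinite :=
  stmt_8_general ε hε L M hζ hfar Z φ hφ hlim
end

section
/- Let (K,d) be a compact geodesic metric space, let ε > 0, and let ζ = (L, M) : [0, ∞) → K × K be an ε-simple-pursuit curve such that d(L(t), M(t)) > ε for all t ≥ 0. Then there exist a nonempty set S ⊂ K × K with diameter less than ε (in the max metric ρ), an integer m ≥ 2, and a strictly increasing sequence of nonnegative integers (i_n)_{n∈ℕ} such that for every n the restriction of ζ to [i_n ε, i_n ε + mε] is a round for S; that is, infinitely many rounds for S all have the same length mε. -/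
open Filter Topology

variable {K : Type*} [MetricSpace K]

/-!
Sample the curve at the times `kε`. Since the distance between pursuer and evader always exceeds
`ε`, the pursuer moves exactly `ε` in each step, so consecutive samples are `ε` apart in `K × K`.
Cut the compact space `K × K` into finitely many cells of diameter `< ε`; consecutive samples
then lie in different cells. In every window of `N + 1` consecutive samples, `N` the number of
cells, some cell is visited twice, so there are arbitrarily late first returns of length
between `2` and `N`. Only finitely many pairs (cell, length) occur, so one of them occurs
infinitely often, and that cell is `S`.
-/

section FirstReturn

variable {α : Type*}

def IsFirstReturn (f : ℕ → α) (k m : ℕ) : Prop :=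
  0 < m ∧ f (k + m) = f k ∧ ∀ j, 0 < j → j < m → f (k + j) ≠ f k

theorem exists_isFirstReturn_le {f : ℕ → α} {k m : ℕ} (hm : 0 < m) (hret : f (k + m) = f k) :
    ∃ m' ≤ m, IsFirstReturn f k m' := by
  classical
  have hQ : ∃ m', 0 < m' ∧ f (k + m') = f k := ⟨m, hm, hret⟩
  obtain ⟨hpos, hfound⟩ := Nat.find_spec hQ
  refine ⟨Nat.find hQ, Nat.find_min' hQ ⟨hm, hret⟩, hpos, hfound, ?_⟩
  exact fun j hj hjm hfj ↦ Nat.find_min hQ hjm ⟨hj, hfj⟩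

theorem exists_isFirstReturn_le_card [Fintype α] (f : ℕ → α) (n : ℕ) :
    ∃ k ≥ n, ∃ m ≤ Fintype.card α, IsFirstReturn f k m := by
  obtain ⟨a, ha, b, hb, hab, heq⟩ :=
    Finset.exists_ne_map_eq_of_card_lt_of_maps_to (s := Finset.range (Fintype.card α + 1))
      (t := Finset.univ) (f := fun j ↦ f (n + j)) (by simp) (fun _ _ ↦ Finset.mem_univ _)
  rw [Finset.mem_range] at ha hb
  wlog hlt : a < b generalizing a b
  · exact this b hb a ha hab.symm heq.symm (by omega)
  obtain ⟨m, hm, hfirst⟩ :=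
    exists_isFirstReturn_le (f := f) (k := n + a) (m := b - a) (by omega)
      (by rw [show n + a + (b - a) = n + b by omega]; exact heq.symm)
  exact ⟨n + a, by omega, m, by omega, hfirst⟩

theorem IsFirstReturn.two_le {f : ℕ → α} (hf : ∀ k, f (k + 1) ≠ f k) {k m : ℕ}
    (h : IsFirstReturn f k m) : 2 ≤ m := by
  obtain ⟨hm, hret, -⟩ := h
  by_contra! hm2
  obtain rfl : m = 1 := by omega
  exact hf k hret

theorem exists_strictMono_isFirstReturn [Fintype α] (f : ℕ → α) :
    ∃ c m, ∃ i : ℕ → ℕ, StrictMono i ∧ ∀ n, f (i n) = c ∧ IsFirstReturn f (i n) m := by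
  have hfreq : ∃ᶠ k in atTop, ∃ c : α, ∃ m : Fin (Fintype.card α + 1),
      f k = c ∧ IsFirstReturn f k m := by
    refine frequently_atTop.2 fun n ↦ ?_
    obtain ⟨k, hk, m, hm, hfirst⟩ := exists_isFirstReturn_le_card f n
    exact ⟨k, hk, f k, ⟨m, by omega⟩, rfl, hfirst⟩
  simp only [frequently_exists] at hfreq
  obtain ⟨c, m, hcm⟩ := hfreq
  exact ⟨c, m, extraction_of_frequently_atTop hcm⟩

end FirstReturn

theorem exists_finite_coloring_diam_lt {X : Type*} [MetricSpace X] [CompactSpace X] {δ : ℝ}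
    (hδ : 0 < δ) : ∃ t : Finset X, ∃ g : X → t, ∀ c, Metric.diam (g ⁻¹' {c}) < δ := by
  obtain ⟨t, -, htfin, hcover⟩ :=
    finite_cover_balls_of_compact (isCompact_univ (X := X)) (by positivity : 0 < δ / 3)
  have hnear : ∀ p : X, ∃ c : htfin.toFinset, dist p c < δ / 3 := fun p ↦ by
    obtain ⟨c, hc, hpc⟩ := Set.mem_iUnion₂.1 (hcover (Set.mem_univ p))
    exact ⟨⟨c, htfin.mem_toFinset.2 hc⟩, hpc⟩
  choose g hg using hnear
  refine ⟨htfin.toFinset, g, fun c ↦ ?_⟩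
  refine (Metric.diam_le_of_forall_dist_le (by positivity) fun p hp q hq ↦ ?_).trans_lt
    (by linarith : 2 * δ / 3 < δ)
  have hpc := hg p
  have hqc := hg q
  rw [Set.mem_preimage, Set.mem_singleton_iff] at hp hq
  rw [hp] at hpc
  rw [hq] at hqc
  linarith [dist_triangle_right p q (c : X)]

def pursuitSample {X : Type*} (ε : ℝ) (L M : ℝ → X) (k : ℕ) : X × X :=
  (L ((k : ℝ) * ε), M ((k : ℝ) * ε))

theorem isRound_of_isFirstReturn {X α : Type*} {ε : ℝ} {L M : ℝ → X} {g : X × X → α} {k m : ℕ}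
    (h : IsFirstReturn (g ∘ pursuitSample ε L M) k m) (hm : 2 ≤ m) :
    IsRound ε L M (g ⁻¹' {g (pursuitSample ε L M k)}) k (k + m) := by
  obtain ⟨-, hret, hmid⟩ := h
  refine ⟨by omega, rfl, hret, fun j hkj hjk ↦ ?_⟩
  have := hmid (j - k) (by omega) (by omega)
  rwa [Nat.add_sub_cancel' hkj.le] at this

theorem SimplePursuitCurve.le_dist_pursuitSample_succ {ε : ℝ} {L M : ℝ → K}
    (hζ : SimplePursuitCurve ε L M)
    (hfar : ∀ k : ℕ, ε ≤ dist (L ((k : ℝ) * ε)) (M ((k : ℝ) * ε))) (k : ℕ) :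
    ε ≤ dist (pursuitSample ε L M k) (pursuitSample ε L M (k + 1)) := by
  have hstep := (hζ.2.2 k (hfar k)).1
  rw [← Nat.cast_succ] at hstep
  rw [Prod.dist_eq]
  exact hstep.ge.trans (le_max_left _ _)

theorem stmt_9_general {K : Type*} [MetricSpace K] [CompactSpace K]
    (ε : ℝ) (hε : 0 < ε) (L M : ℝ → K) (hζ : SimplePursuitCurve ε L M)
    (hfar : ∀ t : ℝ, 0 ≤ t → ε < dist (L t) (M t)) :
    ∃ S : Set (K × K), S.Nonempty ∧ Metric.diam S < ε ∧
      ∃ m : ℕ, 2 ≤ m ∧ ∃ i : ℕ → ℕ, StrictMono i ∧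
        ∀ n : ℕ, IsRound ε L M S (i n) (i n + m) := by
  set P := pursuitSample ε L M
  obtain ⟨t, g, hdiam⟩ := exists_finite_coloring_diam_lt (X := K × K) hε
  have hstep := hζ.le_dist_pursuitSample_succ fun k ↦ (hfar _ (by positivity)).le
  have hcell : ∀ k, g (P (k + 1)) ≠ g (P k) := fun k hk ↦ by
    have hle := Metric.dist_le_diam_of_mem Metric.isBounded_of_compactSpace
      (s := g ⁻¹' {g (P k)}) rfl hk
    linarith [hstep k, hdiam (g (P k))]
  obtain ⟨c, m, i, hi, hround⟩ := exists_strictMono_isFirstReturn (g ∘ P)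
  have hm : 2 ≤ m := (hround 0).2.two_le hcell
  refine ⟨g ⁻¹' {c}, ⟨P (i 0), (hround 0).1⟩, hdiam c, m, hm, i, hi, fun n ↦ ?_⟩
  have := isRound_of_isFirstReturn (hround n).2 hm
  rwa [← (hround n).1]

/-- For a capture-free pursuit curve in a compact geodesic space, there are a nonempty set
`S` of diameter `< ε`, an integer `m ≥ 2`, and infinitely many rounds for `S`, all of the
same length `mε`. -/
theorem stmt_9 {K : Type*} [MetricSpace K] [CompactSpace K] (hK : GeodesicSpace K)
    (ε : ℝ) (hε : 0 < ε) (L M : ℝ → K) (hζ : SimplePursuitCurve ε L M)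
    (hfar : ∀ t : ℝ, 0 ≤ t → ε < dist (L t) (M t)) :
    ∃ S : Set (K × K), S.Nonempty ∧ Metric.diam S < ε ∧
      ∃ m : ℕ, 2 ≤ m ∧ ∃ i : ℕ → ℕ, StrictMono i ∧
        ∀ n : ℕ, IsRound ε L M S (i n) (i n + m) :=
  stmt_9_general ε hε L M hζ hfar
end

section
/- Let (K,d) be a compact geodesic metric space whose metric is convex, i.e., for any two geodesic paths reparametrized affinely as γ₁, γ₂ : [0,1] → K one has d(γ₁(t), γ₂(t)) ≤ (1−t)·d(γ₁(0), γ₂(0)) + t·d(γ₁(1), γ₂(1)) for all t ∈ [0,1]. Then for every ε > 0 and every ε-simple-pursuit curve ζ = (L, M) : [0, ∞) → K × K there exists a time T > 0 such that d(L(T), M(T)) < ε; in particular, Lion wins the lion-and-man game with ε-capture in (K,d). -/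
open Filter Topology

variable {K : Type*} [MetricSpace K]

/-- `γ` is a geodesic path reparametrized affinely on `[0, 1]`. -/
def IsAffineGeod {K : Type*} [MetricSpace K] (γ : ℝ → K) : Prop :=
  ∀ s ∈ Set.Icc (0 : ℝ) 1, ∀ t ∈ Set.Icc (0 : ℝ) 1,
    dist (γ s) (γ t) = |s - t| * dist (γ 0) (γ 1)

/-- The metric of `K` is convex: for any two affinely-reparametrized geodesic paths
`γ₁, γ₂ : [0,1] → K`, `d(γ₁ t, γ₂ t) ≤ (1-t) d(γ₁ 0, γ₂ 0) + t d(γ₁ 1, γ₂ 1)`. -/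
def ConvexMetric (K : Type*) [MetricSpace K] : Prop :=
  ∀ γ₁ γ₂ : ℝ → K, IsAffineGeod γ₁ → IsAffineGeod γ₂ →
    ∀ t ∈ Set.Icc (0 : ℝ) 1,
      dist (γ₁ t) (γ₂ t) ≤ (1 - t) * dist (γ₁ 0) (γ₂ 0) + t * dist (γ₁ 1) (γ₂ 1)

/-!
If the lion never comes within `ε` of the man, then sampled at the multiples of `ε` their
distance decreases to a limit `r ≥ ε`. By compactness, the pursuit restarted at later and later
times has a limit, which is again a pursuit, but one in which the distance stays `r` at every
pursuit step. In a space with convex metric geodesics are unique, and if `B` lies between `A`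
and `C` and `C` between `B` and `D` (with `B ≠ C`), then all four lie on one geodesic from `A`
to `D`. Hence in the limit the lion runs along a single geodesic at constant speed (looking at
the multiples of `ε` when `r > ε`, and at the half-steps when `r = ε`, where the man stands one
step ahead of the lion), which is impossible in a bounded space.
-/

open Set Bornology

lemma LiesBetween.trans_right_left {A B C X : K} (hB : LiesBetween B A C)
    (hX : LiesBetween X B C) : LiesBetween B A X := by
  have hB' : dist A B + dist B C = dist A C := hB
  have hX' : dist B X + dist X C = dist B C := hX
  refine le_antisymm ?_ (dist_triangle _ _ _)
  linarith [dist_triangle A X C]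

lemma LiesBetween.of_tendsto {ι : Type*} {l : Filter ι} [l.NeBot] {a b c : ι → K} {A B C : K}
    (h : ∀ n, LiesBetween (c n) (a n) (b n)) (ha : Tendsto a l (𝓝 A))
    (hb : Tendsto b l (𝓝 B)) (hc : Tendsto c l (𝓝 C)) : LiesBetween C A B :=
  tendsto_nhds_unique ((ha.dist hc).add (hc.dist hb)) ((ha.dist hb).congr fun n => (h n).symm)

lemma IsGeodPath.of_dist_le {g : ℝ → K} {a b : ℝ}
    (hlip : ∀ s ∈ Icc a b, ∀ t ∈ Icc a b, s ≤ t → dist (g s) (g t) ≤ t - s)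
    (hend : dist (g a) (g b) = b - a) : IsGeodPath g a b := by
  intro s hs t ht
  wlog hst : s ≤ t generalizing s t
  · rw [dist_comm, abs_sub_comm]
    exact this t ht s hs (le_of_not_ge hst)
  have hab : a ≤ b := hs.1.trans hs.2
  have has := hlip a ⟨le_rfl, hab⟩ s hs hs.1
  have htb := hlip t ht b ⟨hab, le_rfl⟩ ht.2
  have := dist_triangle4 (g a) (g s) (g t) (g b)
  rw [abs_of_nonpos (sub_nonpos.2 hst)]
  linarith [hlip s hs t ht hst]

lemma exists_isGeodPath (hK : GeodesicSpace K) (A B : K) (s : ℝ) :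
    ∃ g : ℝ → K, IsGeodPath g s (s + dist A B) ∧ g s = A ∧ g (s + dist A B) = B := by
  obtain ⟨a, b, γ, hab, hγ, rfl, rfl⟩ := hK A B
  have hlen : dist (γ a) (γ b) = b - a := by
    rw [hγ a ⟨le_rfl, hab⟩ b ⟨hab, le_rfl⟩, abs_of_nonpos (by linarith)]
    ring
  refine ⟨fun t => γ (t - s + a), ?_, by simp, by simp [hlen]⟩
  intro t ht t' ht'
  rw [hlen] at ht ht'
  rw [hγ _ ⟨by linarith [ht.1], by linarith [ht.2]⟩ _
    ⟨by linarith [ht'.1], by linarith [ht'.2]⟩]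
  ring_nf

lemma exists_isGeodPath_through (hK : GeodesicSpace K) {A B C : K} (hC : LiesBetween C A B) :
    ∃ g : ℝ → K, IsGeodPath g 0 (dist A B) ∧ g 0 = A ∧ g (dist A B) = B ∧
      g (dist A C) = C := by
  obtain ⟨g₁, hg₁, hg₁A, hg₁C⟩ := exists_isGeodPath hK A C 0
  obtain ⟨g₂, hg₂, hg₂C, hg₂B⟩ := exists_isGeodPath hK C B (dist A C)
  rw [zero_add] at hg₁ hg₁C
  rw [hC] at hg₂ hg₂B
  set p := dist A C
  set g : ℝ → K := fun t => if t ≤ p then g₁ t else g₂ t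
  have hgp : g p = C := if_pos le_rfl |>.trans hg₁C
  have hp : 0 ≤ p := dist_nonneg
  have hpD : p ≤ dist A B := hC ▸ le_add_of_nonneg_right dist_nonneg
  have hg0 : g 0 = A := (if_pos hp).trans hg₁A
  have hgD : g (dist A B) = B := by
    by_cases h : dist A B ≤ p
    · have hCB : dist C B = 0 := by linarith [show p + dist C B = dist A B from hC]
      rw [show dist A B = p by linarith, hgp, dist_eq_zero.1 hCB]
    · exact (if_neg h).trans hg₂B
  refine ⟨g, IsGeodPath.of_dist_le ?_ (by rw [hg0, hgD, sub_zero]), hg0, hgD, hgp⟩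
  intro s hs t ht hst
  by_cases htp : t ≤ p
  · simp only [g, if_pos htp, if_pos (hst.trans htp)]
    rw [hg₁ s ⟨hs.1, hst.trans htp⟩ t ⟨ht.1, htp⟩, abs_of_nonpos (by linarith)]
    linarith
  by_cases hsp : s ≤ p
  · calc dist (g s) (g t) ≤ dist (g s) (g p) + dist (g p) (g t) := dist_triangle _ _ _
      _ = (p - s) + (t - p) := by
        simp only [g, if_pos hsp, if_neg htp, if_pos le_rfl]
        rw [hg₁ s ⟨hs.1, hsp⟩ p ⟨hp, le_rfl⟩, hg₁C, ← hg₂C,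
          hg₂ p ⟨le_rfl, hpD⟩ t ⟨by linarith, ht.2⟩, abs_of_nonpos (by linarith),
          abs_of_nonpos (by linarith)]
        ring
      _ = t - s := by ring
  · simp only [g, if_neg htp, if_neg hsp]
    rw [hg₂ s ⟨by linarith, hs.2⟩ t ⟨by linarith, ht.2⟩, abs_of_nonpos (by linarith)]
    linarith

lemma IsGeodPath.isAffineGeod_comp_mul {g : ℝ → K} {D : ℝ} (hg : IsGeodPath g 0 D)
    (hD : 0 ≤ D) : IsAffineGeod (fun t => g (t * D)) := by
  have hmem : ∀ t ∈ Icc (0 : ℝ) 1, t * D ∈ Icc 0 D := fun t ht =>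
    ⟨mul_nonneg ht.1 hD, mul_le_of_le_one_left hD ht.2⟩
  intro s hs t ht
  dsimp only
  rw [hg _ (hmem s hs) _ (hmem t ht), zero_mul, one_mul, hg 0 ⟨le_rfl, hD⟩ D ⟨hD, le_rfl⟩,
    ← sub_mul, abs_mul, abs_of_nonneg hD, zero_sub, abs_neg, abs_of_nonneg hD]

lemma exists_isAffineGeod_through (hK : GeodesicSpace K) {A B C : K} (hC : LiesBetween C A B) :
    ∃ γ : ℝ → K, IsAffineGeod γ ∧ γ 0 = A ∧ γ 1 = B ∧ γ (dist A C / dist A B) = C := by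
  obtain ⟨g, hg, hgA, hgB, hgC⟩ := exists_isGeodPath_through hK hC
  refine ⟨fun t => g (t * dist A B), hg.isAffineGeod_comp_mul dist_nonneg, by simpa,
    by simpa, ?_⟩
  have hAC : dist A B = 0 → dist A C = 0 := fun h =>
    le_antisymm (h ▸ hC ▸ le_add_of_nonneg_right dist_nonneg) dist_nonneg
  simpa [div_mul_cancel_of_imp hAC]

lemma div_dist_mem_Icc_of_liesBetween {A B C : K} (hC : LiesBetween C A B) :
    dist A C / dist A B ∈ Icc (0 : ℝ) 1 :=
  ⟨div_nonneg dist_nonneg dist_nonneg,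
    div_le_one_of_le₀ (hC ▸ le_add_of_nonneg_right dist_nonneg) dist_nonneg⟩

lemma IsAffineGeod.eqOn (hconv : ConvexMetric K) {γ₁ γ₂ : ℝ → K} (h₁ : IsAffineGeod γ₁)
    (h₂ : IsAffineGeod γ₂) (h0 : γ₁ 0 = γ₂ 0) (h1 : γ₁ 1 = γ₂ 1) : EqOn γ₁ γ₂ (Icc 0 1) := by
  intro t ht
  have := hconv γ₁ γ₂ h₁ h₂ t ht
  rw [h0, h1, dist_self, dist_self, mul_zero, mul_zero, add_zero] at this
  exact dist_le_zero.1 this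

lemma IsAffineGeod.dist_le (hconv : ConvexMetric K) {γ : ℝ → K} (hγ : IsAffineGeod γ) (P : K)
    {t : ℝ} (ht : t ∈ Icc (0 : ℝ) 1) :
    dist (γ t) P ≤ (1 - t) * dist (γ 0) P + t * dist (γ 1) P :=
  hconv γ (fun _ => P) hγ (fun s _ t _ => by simp) t ht

lemma eq_of_liesBetween_of_dist_eq (hK : GeodesicSpace K) (hconv : ConvexMetric K)
    {U V X Y : K} (hX : LiesBetween X U V) (hY : LiesBetween Y U V) (h : dist U X = dist U Y) :
    X = Y := by
  obtain ⟨γ₁, hγ₁, hγ₁U, hγ₁V, hγ₁X⟩ := exists_isAffineGeod_through hK hX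
  obtain ⟨γ₂, hγ₂, hγ₂U, hγ₂V, hγ₂Y⟩ := exists_isAffineGeod_through hK hY
  rw [← hγ₁X, ← hγ₂Y, ← h]
  exact hγ₁.eqOn hconv hγ₂ (hγ₁U.trans hγ₂U.symm) (hγ₁V.trans hγ₂V.symm)
    (div_dist_mem_Icc_of_liesBetween hX)

lemma dist_eq_add_add_of_liesBetween (hK : GeodesicSpace K) (hconv : ConvexMetric K)
    {A B C D : K} (hB : LiesBetween B A C) (hC : LiesBetween C B D) (hBC : B ≠ C) :
    dist A D = dist A B + dist B C + dist C D := by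
  obtain ⟨γ, hγ, hγB, hγD, hγC⟩ := exists_isAffineGeod_through hK hC
  have key := hγ.dist_le hconv A (div_dist_mem_Icc_of_liesBetween hC)
  rw [hγB, hγD, hγC, dist_comm C A, dist_comm B A, dist_comm D A] at key
  have hB' : dist A B + dist B C = dist A C := hB
  have hC' : dist B C + dist C D = dist B D := hC
  have hq : 0 < dist B C := dist_pos.2 hBC
  have hBD : 0 < dist B D := by linarith [dist_nonneg (x := C) (y := D)]
  set t := dist B C / dist B D
  have ht : t * dist B D = dist B C := div_mul_cancel₀ _ hBD.ne'
  have hmul : dist B C * (dist A B + dist B C + dist C D) ≤ dist B C * dist A D := by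
    have e : dist B D * ((1 - t) * dist A B + t * dist A D) =
        dist B D * dist A B - dist B C * dist A B + dist B C * dist A D := by
      rw [← ht]; ring
    have := mul_le_mul_of_nonneg_left key hBD.le
    rw [e, ← hB', ← hC'] at this
    linear_combination this
  refine le_antisymm ?_ (le_of_mul_le_mul_left hmul hq)
  calc dist A D ≤ dist A B + dist B D := dist_triangle _ _ _
    _ = dist A B + dist B C + dist C D := by rw [← hC']; ring

lemma not_isBounded_range_of_liesBetween (hK : GeodesicSpace K) (hconv : ConvexMetric K)
    {X : ℕ → K} {c : ℝ} (hc : 0 < c) (hd : ∀ n, dist (X n) (X (n + 1)) = c)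
    (hX : ∀ n, LiesBetween (X (n + 1)) (X n) (X (n + 2))) : ¬ IsBounded (range X) := by
  have hdist (n : ℕ) : dist (X 0) (X n) = n * c ∧ dist (X 0) (X (n + 1)) = (n + 1) * c := by
    induction n with
    | zero => simp [hd 0]
    | succ n ih =>
      refine ⟨by rw [ih.2]; push_cast; ring, ?_⟩
      have hn : LiesBetween (X n) (X 0) (X (n + 1)) := by
        rw [LiesBetween, ih.1, ih.2, hd]; ring
      have hne : X n ≠ X (n + 1) := dist_pos.1 (hd n ▸ hc)
      rw [dist_eq_add_add_of_liesBetween hK hconv hn (hX n) hne, ih.1, hd, hd]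
      push_cast; ring
  rw [Metric.isBounded_iff]
  rintro ⟨C, hC⟩
  obtain ⟨n, hn⟩ := exists_nat_gt (C / c)
  have := hC (mem_range_self 0) (mem_range_self n)
  rw [(hdist n).1] at this
  rw [div_lt_iff₀ hc] at hn
  linarith

/-- Lion and man sampled every `ε / 2` units of time; the pursuit rule applies at the even
indices, which are the multiples of `ε`. -/
structure DiscretePursuit (ε : ℝ) (lion man : ℕ → K) : Prop where
  lion_step : ∀ j, dist (lion j) (lion (j + 1)) ≤ ε / 2
  man_step : ∀ j, dist (man j) (man (j + 1)) ≤ ε / 2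
  lion_jump : ∀ k, dist (lion (2 * k)) (lion (2 * k + 2)) = ε
  lion_between : ∀ k, LiesBetween (lion (2 * k + 2)) (lion (2 * k)) (man (2 * k))
  le_dist : ∀ j, ε ≤ dist (lion j) (man j)

namespace DiscretePursuit

variable {ε r : ℝ} {lion man : ℕ → K}

lemma dist_next_lion_man (h : DiscretePursuit ε lion man) (k : ℕ) :
    dist (lion (2 * k + 2)) (man (2 * k)) = dist (lion (2 * k)) (man (2 * k)) - ε := by
  have := h.lion_between k
  rw [LiesBetween, h.lion_jump] at this
  linarith

lemma dist_man_two_le (h : DiscretePursuit ε lion man) (k : ℕ) :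
    dist (man (2 * k)) (man (2 * k + 2)) ≤ ε := by
  linarith [dist_triangle (man (2 * k)) (man (2 * k + 1)) (man (2 * k + 2)),
    h.man_step (2 * k), h.man_step (2 * k + 1)]

lemma dist_even_succ_le (h : DiscretePursuit ε lion man) (k : ℕ) :
    dist (lion (2 * (k + 1))) (man (2 * (k + 1))) ≤ dist (lion (2 * k)) (man (2 * k)) := by
  rw [mul_add, mul_one]
  linarith [dist_triangle (lion (2 * k + 2)) (man (2 * k)) (man (2 * k + 2)),
    h.dist_next_lion_man k, h.dist_man_two_le k]

lemma shift (h : DiscretePursuit ε lion man) (i : ℕ) :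
    DiscretePursuit ε (fun j => lion (2 * i + j)) (fun j => man (2 * i + j)) where
  lion_step j := h.lion_step (2 * i + j)
  man_step j := h.man_step (2 * i + j)
  lion_jump k := by simpa only [mul_add, add_assoc] using h.lion_jump (i + k)
  lion_between k := by simpa only [mul_add, add_assoc] using h.lion_between (i + k)
  le_dist j := h.le_dist (2 * i + j)

lemma of_tendsto {ι : Type*} {l : Filter ι} [l.NeBot] {lions mans : ι → ℕ → K}
    (h : ∀ n, DiscretePursuit ε (lions n) (mans n))
    (hlion : ∀ j, Tendsto (fun n => lions n j) l (𝓝 (lion j)))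
    (hman : ∀ j, Tendsto (fun n => mans n j) l (𝓝 (man j))) :
    DiscretePursuit ε lion man where
  lion_step j := le_of_tendsto ((hlion j).dist (hlion (j + 1)))
    (Eventually.of_forall fun n => (h n).lion_step j)
  man_step j := le_of_tendsto ((hman j).dist (hman (j + 1)))
    (Eventually.of_forall fun n => (h n).man_step j)
  lion_jump k := tendsto_nhds_unique ((hlion _).dist (hlion _))
    (tendsto_const_nhds.congr fun n => ((h n).lion_jump k).symm)
  lion_between k := LiesBetween.of_tendsto (fun n => (h n).lion_between k) (hlion _) (hman _)
    (hlion _)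
  le_dist j := ge_of_tendsto ((hlion j).dist (hman j))
    (Eventually.of_forall fun n => (h n).le_dist j)

lemma exists_const_dist [CompactSpace K] (h : DiscretePursuit ε lion man) :
    ∃ (r : ℝ) (lion' man' : ℕ → K), DiscretePursuit ε lion' man' ∧
      ∀ k, dist (lion' (2 * k)) (man' (2 * k)) = r := by
  set d : ℕ → ℝ := fun k => dist (lion (2 * k)) (man (2 * k))
  have hd : Tendsto d atTop (𝓝 (⨅ k, d k)) :=
    tendsto_atTop_ciInf (antitone_nat_of_succ_le h.dist_even_succ_le)
      ⟨0, by rintro _ ⟨k, rfl⟩; exact dist_nonneg⟩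
  obtain ⟨a, φ, hφ, ha⟩ :=
    SeqCompactSpace.tendsto_subseq fun i j => (lion (2 * i + j), man (2 * i + j))
  have hcoord (j : ℕ) := tendsto_pi_nhds.1 ha j
  refine ⟨⨅ k, d k, fun j => (a j).1, fun j => (a j).2,
    of_tendsto (fun n => h.shift (φ n)) (fun j => (hcoord j).fst_nhds)
      (fun j => (hcoord j).snd_nhds), fun k => ?_⟩
  refine tendsto_nhds_unique ((hcoord (2 * k)).fst_nhds.dist (hcoord (2 * k)).snd_nhds) ?_
  refine (((tendsto_add_atTop_iff_nat k).2 hd).comp hφ.tendsto_atTop).congr fun n => ?_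
  simp only [d, Function.comp_apply, mul_add]

lemma dist_lion_succ (h : DiscretePursuit ε lion man) (j : ℕ) :
    dist (lion j) (lion (j + 1)) = ε / 2 := by
  obtain ⟨k, rfl | rfl⟩ := Nat.even_or_odd' j <;>
    linarith [h.lion_step (2 * k), h.lion_step (2 * k + 1), h.lion_jump k,
      dist_triangle (lion (2 * k)) (lion (2 * k + 1)) (lion (2 * k + 2))]

lemma dist_man_two (h : DiscretePursuit ε lion man)
    (hr : ∀ k, dist (lion (2 * k)) (man (2 * k)) = r) (k : ℕ) :
    dist (man (2 * k)) (man (2 * k + 2)) = ε := by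
  have hr' : dist (lion (2 * k + 2)) (man (2 * k + 2)) = r := hr (k + 1)
  linarith [dist_triangle (lion (2 * k + 2)) (man (2 * k)) (man (2 * k + 2)),
    h.dist_next_lion_man k, hr k, h.dist_man_two_le k]

lemma dist_man_succ (h : DiscretePursuit ε lion man)
    (hr : ∀ k, dist (lion (2 * k)) (man (2 * k)) = r) (j : ℕ) :
    dist (man j) (man (j + 1)) = ε / 2 := by
  obtain ⟨k, rfl | rfl⟩ := Nat.even_or_odd' j <;>
    linarith [h.man_step (2 * k), h.man_step (2 * k + 1), h.dist_man_two hr k,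
      dist_triangle (man (2 * k)) (man (2 * k + 1)) (man (2 * k + 2))]

/-- For `r > ε`, `man (2 * k)` lies between `lion (2 * k + 2)` and `man (2 * k + 2)`. -/
lemma liesBetween_lion_of_lt (hK : GeodesicSpace K) (hconv : ConvexMetric K)
    (h : DiscretePursuit ε lion man) (hr : ∀ k, dist (lion (2 * k)) (man (2 * k)) = r)
    (hεr : ε < r) (k : ℕ) :
    LiesBetween (lion (2 * (k + 1))) (lion (2 * k)) (lion (2 * (k + 2))) := by
  have hr' : dist (lion (2 * k + 2)) (man (2 * k + 2)) = r := hr (k + 1)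
  have hman : LiesBetween (man (2 * k)) (lion (2 * k + 2)) (man (2 * k + 2)) := by
    rw [LiesBetween, h.dist_next_lion_man, hr, h.dist_man_two hr, hr']
    ring
  have hne : lion (2 * k + 2) ≠ man (2 * k) :=
    dist_pos.1 (by rw [h.dist_next_lion_man, hr]; linarith)
  have hfar : LiesBetween (lion (2 * k + 2)) (lion (2 * k)) (man (2 * k + 2)) := by
    rw [LiesBetween, dist_eq_add_add_of_liesBetween hK hconv (h.lion_between k) hman hne,
      h.lion_jump, h.dist_next_lion_man, hr, h.dist_man_two hr, hr']
    ring
  exact hfar.trans_right_left (h.lion_between (k + 1))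

/-- When the man keeps his distance `ε`, he stands where the lion will be after the next
pursuit step, and by uniqueness of geodesics his midway positions are the lion's. -/
lemma liesBetween_lion_of_eq (hK : GeodesicSpace K) (hconv : ConvexMetric K)
    (h : DiscretePursuit ε lion man) (hr : ∀ k, dist (lion (2 * k)) (man (2 * k)) = r)
    (hεr : r = ε) (j : ℕ) :
    LiesBetween (lion (j + 1)) (lion j) (lion (j + 2)) := by
  obtain ⟨k, rfl | rfl⟩ := Nat.even_or_odd' j
  · rw [LiesBetween, h.dist_lion_succ, h.dist_lion_succ (2 * k + 1), h.lion_jump]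
    ring
  have hcatch (k : ℕ) : lion (2 * k + 2) = man (2 * k) :=
    dist_eq_zero.1 (by rw [h.dist_next_lion_man, hr, hεr, sub_self])
  have hcatch' : lion (2 * k + 4) = man (2 * k + 2) := hcatch (k + 1)
  have hstep₂ : dist (lion (2 * k + 2)) (lion (2 * k + 3)) = ε / 2 := h.dist_lion_succ _
  have hstep₃ : dist (lion (2 * k + 3)) (lion (2 * k + 4)) = ε / 2 := h.dist_lion_succ _
  have hjump : dist (lion (2 * k + 2)) (lion (2 * k + 4)) = ε := h.lion_jump (k + 1)
  have hlion : LiesBetween (lion (2 * k + 3)) (man (2 * k)) (man (2 * k + 2)) := by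
    rw [← hcatch k, ← hcatch', LiesBetween, hstep₂, hstep₃, hjump]
    ring
  have hman : LiesBetween (man (2 * k + 1)) (man (2 * k)) (man (2 * k + 2)) := by
    rw [LiesBetween, h.dist_man_succ hr, h.dist_man_succ hr (2 * k + 1), h.dist_man_two hr]
    ring
  have hmid : lion (2 * k + 3) = man (2 * k + 1) :=
    eq_of_liesBetween_of_dist_eq hK hconv hlion hman
      (by rw [h.dist_man_succ hr, ← hcatch k, hstep₂])
  have hfar : dist (lion (2 * k + 1)) (lion (2 * k + 3)) = ε := by
    refine le_antisymm ?_ (hmid ▸ h.le_dist (2 * k + 1))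
    linarith [dist_triangle (lion (2 * k + 1)) (lion (2 * k + 2)) (lion (2 * k + 3)),
      h.dist_lion_succ (2 * k + 1), h.dist_lion_succ (2 * k + 2)]
  rw [LiesBetween, h.dist_lion_succ, hstep₂, hfar]
  ring

lemma not_isBounded_range (hK : GeodesicSpace K) (hconv : ConvexMetric K) (hε : 0 < ε)
    (h : DiscretePursuit ε lion man) (hr : ∀ k, dist (lion (2 * k)) (man (2 * k)) = r) :
    ¬ IsBounded (range lion) := by
  have hεr : ε ≤ r := (h.le_dist 0).trans_eq (hr 0)
  rcases hεr.lt_or_eq with hεr | hεr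
  · exact fun hbdd => not_isBounded_range_of_liesBetween hK hconv hε h.lion_jump
      (h.liesBetween_lion_of_lt hK hconv hr hεr) (hbdd.subset (range_comp_subset_range _ _))
  · exact not_isBounded_range_of_liesBetween hK hconv (half_pos hε) h.dist_lion_succ
      (h.liesBetween_lion_of_eq hK hconv hr hεr.symm)

end DiscretePursuit

namespace SimplePursuitCurve

variable {ε : ℝ} {L M : ℝ → K}

lemma le_dist_of_nonneg (hζ : SimplePursuitCurve ε L M)
    (hcap : ∀ T, 0 < T → ε ≤ dist (L T) (M T)) {T : ℝ} (hT : 0 ≤ T) :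
    ε ≤ dist (L T) (M T) := by
  rcases hT.eq_or_lt with rfl | hT
  · have hL := (hζ.1.continuousOn 0 self_mem_Ici).mono (Ioi_subset_Ici_self (a := 0))
    have hM := (hζ.2.1.continuousOn 0 self_mem_Ici).mono (Ioi_subset_Ici_self (a := 0))
    exact ge_of_tendsto (hL.tendsto.dist hM.tendsto) (eventually_nhdsWithin_of_forall hcap)
  · exact hcap T hT

lemma discretePursuit (hζ : SimplePursuitCurve ε L M) (hε : 0 < ε)
    (hcap : ∀ T, 0 < T → ε ≤ dist (L T) (M T)) :
    DiscretePursuit ε (fun j : ℕ => L (j * (ε / 2))) (fun j : ℕ => M (j * (ε / 2))) := by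
  have hnn (j : ℕ) : (j : ℝ) * (ε / 2) ∈ Ici (0 : ℝ) := by rw [mem_Ici]; positivity
  have hstep (j : ℕ) : dist ((j : ℝ) * (ε / 2)) ((j + 1 : ℕ) * (ε / 2)) = ε / 2 := by
    rw [Real.dist_eq, Nat.cast_succ, add_mul, one_mul, sub_add_cancel_left, abs_neg,
      abs_of_pos (half_pos hε)]
  have heven (k : ℕ) : ((2 * k : ℕ) : ℝ) * (ε / 2) = k * ε := by push_cast; ring
  have heven' (k : ℕ) : ((2 * k + 2 : ℕ) : ℝ) * (ε / 2) = (k + 1) * ε := by push_cast; ring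
  have hpursuit (k : ℕ) :=
    hζ.2.2 k (by rw [← heven]; exact hζ.le_dist_of_nonneg hcap (hnn _))
  refine ⟨fun j => ?_, fun j => ?_, fun k => ?_, fun k => ?_, fun j => ?_⟩
  · simpa only [NNReal.coe_one, one_mul, hstep] using hζ.1.dist_le_mul _ (hnn j) _ (hnn (j + 1))
  · simpa only [NNReal.coe_one, one_mul, hstep] using hζ.2.1.dist_le_mul _ (hnn j) _ (hnn (j + 1))
  · simpa only [heven, heven'] using (hpursuit k).1
  · simpa only [heven, heven'] using (hpursuit k).2
  · exact hζ.le_dist_of_nonneg hcap (hnn j)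

end SimplePursuitCurve

/-- In a compact geodesic space with convex metric, every `ε`-simple-pursuit curve
achieves `ε`-capture at some positive time: Lion wins. -/
theorem stmt_12 {K : Type*} [MetricSpace K] [CompactSpace K] (hK : GeodesicSpace K)
    (hconv : ConvexMetric K) (ε : ℝ) (hε : 0 < ε)
    (L M : ℝ → K) (hζ : SimplePursuitCurve ε L M) :
    ∃ T : ℝ, 0 < T ∧ dist (L T) (M T) < ε := by
  by_contra! hcap
  obtain ⟨r, lion, man, h, hr⟩ := (hζ.discretePursuit hε hcap).exists_const_dist
  exact h.not_isBounded_range hK hconv hε hr (IsBounded.all _)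
end
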